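/- Let u_L > 0 and u_R > u_L be fixed. Define η'' : ℝ → ℝ by η''(x) = 1 for x ≤ 0, η''(x) = ((δ-1)/u_L)x + 1 for 0 ≤ x ≤ u_L, and η''(x) = δ for x ≥ u_L, where 0 < δ < 1. Then for any C² function η̄ with this second derivative: (1) η̄ is strictly convex; (2) the relative entropy satisfies ∂_v η̄(u|v) = -η̄''(v)(u - v), so ∂_v η̄(u|v) > 0 for v > u and ∂_v η̄(u|v) < 0 for v < u; (3) η̄(u_L|u_R) = (δ/2)(u_L - u_R)². -/

import Mathlib

/-!
Since η̄'' is positive, η̄ is strictly convex, and differentiating the relative entropy in `v`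
leaves only `-η̄''(v)(u - v)`, whose sign is that of `v - u`. On `[u_L, u_R]` the second derivative
is the constant `δ`, so `w ↦ η̄(u_L|w) - (δ/2)(u_L - w)²` has zero derivative there and vanishes
at `w = u_L`.
-/

open Set

noncomputable def relEntropy (f : ℝ → ℝ) (u v : ℝ) : ℝ :=
  f u - f v - deriv f v * (u - v)

theorem hasDerivAt_relEntropy {f : ℝ → ℝ} {f'' : ℝ} (u : ℝ) {v : ℝ}
    (hf : DifferentiableAt ℝ f v) (hf' : HasDerivAt (deriv f) f'' v) :
    HasDerivAt (relEntropy f u) (-f'' * (u - v)) v := by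
  have h := ((hasDerivAt_const v (f u)).sub hf.hasDerivAt).sub
    (hf'.mul ((hasDerivAt_const v u).sub (hasDerivAt_id v)))
  exact h.congr_deriv (by simp)

theorem relEntropy_eq_of_deriv2_eqOn {f : ℝ → ℝ} {a b c : ℝ} (hab : a ≤ b)
    (hf : Differentiable ℝ f) (hf' : Differentiable ℝ (deriv f))
    (hc : EqOn (deriv (deriv f)) (fun _ => c) (Icc a b)) :
    relEntropy f a b = c / 2 * (a - b) ^ 2 := by
  set g : ℝ → ℝ := fun w => relEntropy f a w - c / 2 * (a - w) ^ 2
  have hg : ∀ x, HasDerivAt g (-deriv (deriv f) x * (a - x) + c * (a - x)) x := fun x =>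
    ((hasDerivAt_relEntropy a (hf x) (hf' x).hasDerivAt).sub
      (((hasDerivAt_id' x).const_sub a).pow 2 |>.const_mul (c / 2))).congr_deriv
      (by push_cast; ring)
  have hconst := constant_of_has_deriv_right_zero
    (fun x _ => (hg x).continuousAt.continuousWithinAt)
    (fun x hx => by simpa [hc (Ico_subset_Icc_self hx)] using (hg x).hasDerivWithinAt)
    b ⟨hab, le_rfl⟩
  have hga : g a = 0 := by simp [g, relEntropy]
  simp only [g] at hconst hga
  linarith

section TailoredEntropy

variable {uL δ x : ℝ}

noncomputable def tailoredSecondDeriv (uL δ x : ℝ) : ℝ :=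
  if x ≤ 0 then 1 else if x ≤ uL then ((δ - 1) / uL) * x + 1 else δ

theorem tailoredSecondDeriv_pos (huL : 0 < uL) (hδ : 0 < δ) : 0 < tailoredSecondDeriv uL δ x := by
  unfold tailoredSecondDeriv
  split_ifs with h0 hL
  · exact one_pos
  · have : (δ - 1) / uL * x + 1 = (δ * x + (uL - x)) / uL := by field_simp; ring
    rw [this]
    exact div_pos (by nlinarith) huL
  · exact hδ

theorem tailoredSecondDeriv_of_le (huL : 0 < uL) (hx : uL ≤ x) : tailoredSecondDeriv uL δ x = δ := by
  unfold tailoredSecondDeriv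
  rcases hx.eq_or_lt with rfl | hlt
  · rw [if_neg huL.not_ge, if_pos le_rfl]
    field_simp
    ring
  · rw [if_neg (by linarith), if_neg hlt.not_ge]

end TailoredEntropy

theorem stmt_7_general (uL uR δ : ℝ) (huL : 0 < uL) (huR : uL < uR) (hδ0 : 0 < δ)
    (ηpp : ℝ → ℝ)
    (hηpp : ηpp = fun x => if x ≤ 0 then 1 else if x ≤ uL then ((δ - 1) / uL) * x + 1 else δ)
    (ηb : ℝ → ℝ) (hC2 : ContDiff ℝ 2 ηb) (hdd : deriv (deriv ηb) = ηpp) :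
    StrictConvexOn ℝ Set.univ ηb ∧
    (∀ u v : ℝ,
      deriv (fun w => ηb u - ηb w - deriv ηb w * (u - w)) v = -(ηpp v) * (u - v) ∧
      (v > u → 0 < deriv (fun w => ηb u - ηb w - deriv ηb w * (u - w)) v) ∧
      (v < u → deriv (fun w => ηb u - ηb w - deriv ηb w * (u - w)) v < 0)) ∧
    ηb uL - ηb uR - deriv ηb uR * (uL - uR) = (δ / 2) * (uL - uR) ^ 2 := by
  have hηpp' : ηpp = tailoredSecondDeriv uL δ := hηpp
  have hC2' : ContDiff ℝ (1 + 1) ηb := hC2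
  obtain ⟨hf, -, hC1⟩ := contDiff_succ_iff_deriv.mp hC2'
  have hf' : Differentiable ℝ (deriv ηb) := hC1.differentiable one_ne_zero
  have hpos : ∀ v, 0 < ηpp v := fun v => hηpp' ▸ tailoredSecondDeriv_pos huL hδ0
  refine ⟨strictConvexOn_of_deriv2_pos convex_univ hf.continuous.continuousOn
    fun v _ => by simpa [hdd] using hpos v, fun u v => ?_, ?_⟩
  · have hd : deriv (relEntropy ηb u) v = -(ηpp v) * (u - v) :=
      (hasDerivAt_relEntropy u (hf v) (hdd ▸ (hf' v).hasDerivAt)).deriv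
    have hv := hpos v
    exact ⟨hd, fun h => hd ▸ by nlinarith, fun h => hd ▸ by nlinarith⟩
  · exact relEntropy_eq_of_deriv2_eqOn huR.le hf hf'
      fun x hx => (hdd.trans hηpp') ▸ tailoredSecondDeriv_of_le huL hx.1

/-- Properties of the tailored entropy η̄ whose second derivative is the piecewise
function equal to 1 on (-∞,0], affine on [0,u_L] and δ on [u_L,∞):
(1) η̄ is strictly convex; (2) ∂_v η̄(u|v) = -η̄''(v)(u-v) with the stated signs;
(3) η̄(u_L|u_R) = (δ/2)(u_L-u_R)². -/
theorem stmt_7 (uL uR δ : ℝ) (huL : 0 < uL) (huR : uL < uR) (hδ0 : 0 < δ) (hδ1 : δ < 1)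
    (ηpp : ℝ → ℝ)
    (hηpp : ηpp = fun x => if x ≤ 0 then 1 else if x ≤ uL then ((δ - 1) / uL) * x + 1 else δ)
    (ηb : ℝ → ℝ) (hC2 : ContDiff ℝ 2 ηb) (hdd : deriv (deriv ηb) = ηpp) :
    StrictConvexOn ℝ Set.univ ηb ∧
    (∀ u v : ℝ,
      deriv (fun w => ηb u - ηb w - deriv ηb w * (u - w)) v = -(ηpp v) * (u - v) ∧
      (v > u → 0 < deriv (fun w => ηb u - ηb w - deriv ηb w * (u - w)) v) ∧
      (v < u → deriv (fun w => ηb u - ηb w - deriv ηb w * (u - w)) v < 0)) ∧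
    ηb uL - ηb uR - deriv ηb uR * (uL - uR) = (δ / 2) * (uL - uR) ^ 2 :=
  stmt_7_general uL uR δ huL huR hδ0 ηpp hηpp ηb hC2 hdd
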